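/- Let θ be an irrational number in (0,1) with continued fraction convergents p_n/q_n and partial quotients a_n. Then for any integers n ≥ 1, 0 ≤ s ≤ a_{n+1}, and 1 ≤ r ≤ q_n + q_{n-1} - 1, one has ⌊(s q_n + r)θ⌋ = s p_n + ⌊rθ⌋. -/

import Mathlib

/-- The Gauss-map iterates of `θ`: `cfTheta θ 0 = θ` and
`cfTheta θ (n+1) = {1 / cfTheta θ n}` (fractional part), so that
`θ = [0; a₁, a₂, ...]` with `aₙ = ⌊1 / cfTheta θ (n-1)⌋`. -/
noncomputable def cfTheta (θ : ℝ) : ℕ → ℝ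
  | 0 => θ
  | n + 1 => Int.fract (1 / cfTheta θ n)

/-- The `n`-th partial quotient `aₙ` (for `n ≥ 1`) of the continued fraction
expansion `θ = [0; a₁, a₂, ...]` of `θ ∈ (0,1)`. -/
noncomputable def cfA (θ : ℝ) (n : ℕ) : ℤ := ⌊1 / cfTheta θ (n - 1)⌋

/-- Numerators `pₙ` of the convergents of `θ = [0; a₁, a₂, ...]`:
`p₋₁ = 1`, `p₀ = 0`, `p_{n+1} = a_{n+1} pₙ + p_{n-1}`. -/
noncomputable def cfP (θ : ℝ) : ℕ → ℤ
  | 0 => 0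
  | 1 => 1
  | n + 2 => cfA θ (n + 2) * cfP θ (n + 1) + cfP θ n

/-- Denominators `qₙ` of the convergents of `θ = [0; a₁, a₂, ...]`:
`q₋₁ = 0`, `q₀ = 1`, `q_{n+1} = a_{n+1} qₙ + q_{n-1}`. -/
noncomputable def cfQ (θ : ℝ) : ℕ → ℤ
  | 0 => 1
  | 1 => cfA θ 1
  | n + 2 => cfA θ (n + 2) * cfQ θ (n + 1) + cfQ θ n

/-!
Write `δₖ = (-1)ᵏ (qₖθ - pₖ) > 0`, so that `(s qₙ + r)θ = s pₙ + rθ + s (qₙθ - pₙ)` and the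
shift `s (qₙθ - pₙ)` has absolute value `s δₙ ≤ aₙ₊₁ δₙ < δₙ₋₁`. Its sign is `(-1)ⁿ`, and in
that direction `rθ` is at distance at least `δₙ₋₁` from the next integer: this is the best
approximation property of `qₙ₋₁`, proved by writing `r = x qₙ₋₁ + y qₙ` in the unimodular basis
of consecutive convergents. Hence the shift does not cross an integer.
-/

lemma le_mul_sub_mul_of_lt_add {u v : ℝ} (hu : 0 ≤ u) (hv : 0 ≤ v) {Q₁ Q₂ x y : ℤ}
    (hQ₁ : 0 ≤ Q₁) (hQ₂ : 0 ≤ Q₂) (h₁ : 1 ≤ x * Q₁ + y * Q₂) (h₂ : x * Q₁ + y * Q₂ < Q₁ + Q₂)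
    (hpos : 0 < x * u - y * v) : u ≤ x * u - y * v := by
  have hy : y ≤ 0 := by
    by_contra! hy
    have hx : 0 < x := by
      by_contra! hx
      have hxu : (x : ℝ) * u ≤ 0 := mul_nonpos_of_nonpos_of_nonneg (by exact_mod_cast hx) hu
      have hyv : 0 ≤ (y : ℝ) * v := mul_nonneg (by exact_mod_cast hy.le) hv
      linarith
    nlinarith
  have hx : (1 : ℝ) ≤ x := by exact_mod_cast (show 0 < x by nlinarith)
  have hyv : (y : ℝ) * v ≤ 0 := mul_nonpos_of_nonpos_of_nonneg (by exact_mod_cast hy) hv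
  nlinarith

lemma cfTheta_succ (θ : ℝ) (k : ℕ) : cfTheta θ (k + 1) = 1 / cfTheta θ k - cfA θ (k + 1) := by
  rw [cfTheta, Int.fract, cfA, Nat.add_sub_cancel]

lemma cfP_succ_mul_cfQ_sub_cfP_mul_cfQ_succ (θ : ℝ) :
    ∀ n, cfP θ (n + 1) * cfQ θ n - cfP θ n * cfQ θ (n + 1) = (-1) ^ n
  | 0 => by simp [cfP, cfQ]
  | n + 1 => by
    have ih := cfP_succ_mul_cfQ_sub_cfP_mul_cfQ_succ θ n
    rw [cfP, cfQ, pow_succ]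
    linear_combination -ih

lemma exists_cfQ_cfP_combination (θ : ℝ) (k : ℕ) (r m : ℤ) :
    ∃ x y : ℤ, x * cfQ θ k + y * cfQ θ (k + 1) = r ∧ x * cfP θ k + y * cfP θ (k + 1) = m := by
  have hdet := cfP_succ_mul_cfQ_sub_cfP_mul_cfQ_succ θ k
  have hsq : ((-1 : ℤ) ^ k) ^ 2 = 1 := by rw [← pow_mul, mul_comm, pow_mul]; norm_num
  refine ⟨(-1) ^ k * (r * cfP θ (k + 1) - m * cfQ θ (k + 1)),
    (-1) ^ k * (m * cfQ θ k - r * cfP θ k), ?_, ?_⟩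
  · linear_combination ((-1) ^ k * r) * hdet + r * hsq
  · linear_combination ((-1) ^ k * m) * hdet + m * hsq

/-- The distance `|qₙθ - pₙ|`, the sign `(-1)ⁿ` being that of `qₙθ - pₙ`. -/
noncomputable def cfDelta (θ : ℝ) (n : ℕ) : ℝ := (-1) ^ n * (cfQ θ n * θ - cfP θ n)

lemma cfDelta_add_two (θ : ℝ) (n : ℕ) :
    cfDelta θ (n + 2) = cfDelta θ n - cfA θ (n + 2) * cfDelta θ (n + 1) := by
  simp only [cfDelta, cfQ, cfP, pow_succ]
  push_cast
  ring

section ContinuedFraction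

variable {θ : ℝ}

lemma irrational_cfTheta (hθ : Irrational θ) : ∀ k, Irrational (cfTheta θ k)
  | 0 => hθ
  | k + 1 => by
    rw [cfTheta_succ, one_div]
    exact (irrational_cfTheta hθ k).inv.sub_intCast _

lemma cfTheta_mem_Ioo (hθ : Irrational θ) (hθ01 : θ ∈ Set.Ioo 0 1) :
    ∀ k, cfTheta θ k ∈ Set.Ioo 0 1
  | 0 => hθ01
  | k + 1 =>
    ⟨(Int.fract_nonneg _).lt_of_ne' (irrational_cfTheta hθ (k + 1)).ne_zero, Int.fract_lt_one _⟩

lemma one_le_cfA (hθ : Irrational θ) (hθ01 : θ ∈ Set.Ioo 0 1) (k : ℕ) : 1 ≤ cfA θ (k + 1) := by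
  obtain ⟨h0, h1⟩ := cfTheta_mem_Ioo hθ hθ01 k
  rw [cfA, Nat.add_sub_cancel, Int.le_floor, Int.cast_one]
  exact one_le_one_div h0 h1.le

lemma cfQ_pos (hθ : Irrational θ) (hθ01 : θ ∈ Set.Ioo 0 1) : ∀ n, 0 < cfQ θ n
  | 0 => one_pos
  | 1 => one_le_cfA hθ hθ01 0
  | n + 2 => by
    have ha := one_le_cfA hθ hθ01 (n + 1)
    have hq₀ := cfQ_pos hθ hθ01 n
    have hq₁ := cfQ_pos hθ hθ01 (n + 1)
    rw [cfQ]
    nlinarith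

lemma cfDelta_succ (hθ : Irrational θ) :
    ∀ n, cfDelta θ (n + 1) = cfTheta θ (n + 1) * cfDelta θ n
  | 0 => by
    have hθ₀ : θ ≠ 0 := hθ.ne_zero
    rw [cfTheta_succ]
    simp only [cfDelta, cfQ, cfP, cfTheta]
    field_simp
    ring
  | n + 1 => by
    have ih := cfDelta_succ hθ n
    have hne := (irrational_cfTheta hθ (n + 1)).ne_zero
    rw [cfDelta_add_two, cfTheta_succ, ih]
    field_simp

lemma cfDelta_pos (hθ : Irrational θ) (hθ01 : θ ∈ Set.Ioo 0 1) : ∀ n, 0 < cfDelta θ n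
  | 0 => by simpa [cfDelta, cfQ, cfP] using hθ01.1
  | n + 1 => by
    rw [cfDelta_succ hθ]
    exact mul_pos (cfTheta_mem_Ioo hθ hθ01 (n + 1)).1 (cfDelta_pos hθ hθ01 n)

lemma cfA_mul_cfDelta_lt (hθ : Irrational θ) (hθ01 : θ ∈ Set.Ioo 0 1) (n : ℕ) :
    cfA θ (n + 2) * cfDelta θ (n + 1) < cfDelta θ n := by
  have := cfDelta_pos hθ hθ01 (n + 2)
  rw [cfDelta_add_two] at this
  linarith

/-- Best approximation: on the side of `rθ` where `qₖθ` lies, `rθ` is not closer than `qₖθ` to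
an integer, as long as `r < qₖ₊₁ + qₖ`. -/
lemma cfDelta_le (hθ : Irrational θ) (hθ01 : θ ∈ Set.Ioo 0 1) {k : ℕ} {r m : ℤ} (hr₁ : 1 ≤ r)
    (hr₂ : r < cfQ θ (k + 1) + cfQ θ k) (hpos : 0 < (-1) ^ k * (r * θ - m)) :
    cfDelta θ k ≤ (-1) ^ k * (r * θ - m) := by
  obtain ⟨x, y, rfl, rfl⟩ := exists_cfQ_cfP_combination θ k r m
  have hcoord : (-1) ^ k * (((x * cfQ θ k + y * cfQ θ (k + 1) : ℤ) : ℝ) * θ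
      - (x * cfP θ k + y * cfP θ (k + 1) : ℤ)) = x * cfDelta θ k - y * cfDelta θ (k + 1) := by
    simp only [cfDelta, pow_succ]
    push_cast
    ring
  rw [hcoord] at hpos ⊢
  exact le_mul_sub_mul_of_lt_add (cfDelta_pos hθ hθ01 k).le (cfDelta_pos hθ hθ01 (k + 1)).le
    (cfQ_pos hθ hθ01 k).le (cfQ_pos hθ hθ01 (k + 1)).le hr₁ (by linarith) hpos

lemma floor_add_mul_cfQ_sub_cfP (hθ : Irrational θ) (hθ01 : θ ∈ Set.Ioo 0 1) {k : ℕ} {r s : ℤ}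
    (hr₁ : 1 ≤ r) (hr₂ : r < cfQ θ (k + 1) + cfQ θ k) (hs₀ : 0 ≤ s) (hs₁ : s ≤ cfA θ (k + 2)) :
    ⌊r * θ + s * (cfQ θ (k + 1) * θ - cfP θ (k + 1))⌋ = ⌊(r : ℝ) * θ⌋ := by
  have hshift : s * cfDelta θ (k + 1) < cfDelta θ k :=
    (mul_le_mul_of_nonneg_right (by exact_mod_cast hs₁) (cfDelta_pos hθ hθ01 (k + 1)).le).trans_lt
      (cfA_mul_cfDelta_lt hθ hθ01 k)
  have hshift₀ : 0 ≤ s * cfDelta θ (k + 1) :=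
    mul_nonneg (by exact_mod_cast hs₀) (cfDelta_pos hθ hθ01 (k + 1)).le
  have hfloor_le := Int.floor_le ((r : ℝ) * θ)
  have hlt_floor := Int.lt_floor_add_one ((r : ℝ) * θ)
  rw [Int.floor_eq_iff]
  rcases neg_one_pow_eq_or ℝ k with hk | hk
  · have hD : cfQ θ (k + 1) * θ - cfP θ (k + 1) = -cfDelta θ (k + 1) := by
      simp [cfDelta, pow_succ, hk]
    have hfract : (0 : ℝ) < r * θ - ⌊(r : ℝ) * θ⌋ := by
      rw [Int.self_sub_floor, Int.fract_pos]
      exact (hθ.intCast_mul (by omega)).ne_int _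
    have hgap := cfDelta_le hθ hθ01 hr₁ hr₂ (by rwa [hk, one_mul])
    rw [hk, one_mul] at hgap
    rw [hD]
    constructor <;> linarith
  · have hD : cfQ θ (k + 1) * θ - cfP θ (k + 1) = cfDelta θ (k + 1) := by
      simp [cfDelta, pow_succ, hk]
    have hgap := cfDelta_le hθ hθ01 (m := ⌊(r : ℝ) * θ⌋ + 1) hr₁ hr₂
      (by push_cast; rw [hk]; linarith)
    rw [hk] at hgap
    push_cast at hgap
    rw [hD]
    constructor <;> linarith

end ContinuedFraction

/-- For `θ ∈ (0,1)` irrational with partial quotients `aₙ` and convergents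
`pₙ/qₙ`: for `n ≥ 1`, `0 ≤ s ≤ a_{n+1}` and `1 ≤ r ≤ qₙ + q_{n-1} - 1`,
one has `⌊(s qₙ + r)θ⌋ = s pₙ + ⌊rθ⌋`. -/
theorem floor_s_qn_add (θ : ℝ) (hθ : Irrational θ) (hθ01 : θ ∈ Set.Ioo (0:ℝ) 1)
    (n : ℕ) (hn : 1 ≤ n) (s : ℤ) (hs0 : 0 ≤ s) (hs1 : s ≤ cfA θ (n + 1))
    (r : ℤ) (hr1 : 1 ≤ r) (hr2 : r ≤ cfQ θ n + cfQ θ (n - 1) - 1) :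
    ⌊((s * cfQ θ n + r : ℤ) : ℝ) * θ⌋ = s * cfP θ n + ⌊(r : ℝ) * θ⌋ := by
  obtain ⟨k, rfl⟩ := Nat.exists_eq_add_of_le' hn
  rw [Nat.add_sub_cancel] at hr2
  have hsplit : ((s * cfQ θ (k + 1) + r : ℤ) : ℝ) * θ
      = ((s * cfP θ (k + 1) : ℤ) : ℝ) + (r * θ + s * (cfQ θ (k + 1) * θ - cfP θ (k + 1))) := by
    push_cast
    ring
  rw [hsplit, Int.floor_intCast_add, floor_add_mul_cfQ_sub_cfP hθ hθ01 hr1 (by omega) hs0 hs1]
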